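/- arXiv:2405.19906 — 2 statements merged into one kernel-verified Lean document; each statement's English description precedes it below -/
import Mathlib

section
/- Let δ: L → L⊗L be a linear map on a Lie algebra L satisfying the 1-cocycle condition δ([x,y]) = [x⊗1 + 1⊗x, δ(y)] - [y⊗1 + 1⊗y, δ(x)]. Suppose T is a Lie algebra derivation of L and δ∘T = (T⊗1 + 1⊗T)∘δ. Define δ_z := (τ_z ⊗ 1)∘δ, where τ_z = e^{zT} acting formally (as a map L → (L⊗L)[[z]] assuming T is locally nilpotent). Then δ_z satisfies the translated cocycle identity δ_z([x,y]) = [τ_z(x)⊗1 + 1⊗x, δ_z(y)] - [τ_z(y)⊗1 + 1⊗y, δ_z(x)] for all x,y ∈ L. -/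
/-!
Since `T` is a locally nilpotent derivation, the Leibniz rule
`Tⁿ[a, b] = ∑ (n choose i) [Tⁱ a, Tⁿ⁻ⁱ b]` turns `e^{zT}[a, b]` into the Cauchy product of the
truncated series `e^{zT} a` and `e^{zT} b`, so `τ_z` is a Lie algebra endomorphism. Applying
`τ_z ⊗ 1` to the cocycle identity `δ[x, y] = x • δ y - y • δ x` then replaces the action of `x`
on the first tensor factor by that of `τ_z x`, which is the translated identity.
-/

open TensorProduct Finset

theorem sum_range_diag_eq_sum_range_sum_range {M : Type*} [AddCommMonoid M] (n : ℕ)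
    (f : ℕ → ℕ → M) (hf : ∀ i j, n ≤ i + j → f i j = 0) :
    ∑ m ∈ range n, ∑ i ∈ range (m + 1), f i (m - i) = ∑ i ∈ range n, ∑ j ∈ range n, f i j := by
  rw [sum_range_diag_flip]
  refine sum_congr rfl fun i _ ↦ sum_subset (range_subset_range.2 (n.sub_le i)) fun j _ hj ↦ ?_
  rw [mem_range, not_lt] at hj
  exact hf i j (by omega)

theorem choose_mul_pow_div_factorial {K : Type*} [Field K] [CharZero K] (z : K) {i n : ℕ}
    (h : i ≤ n) :
    (n.choose i : K) * (z ^ n / n.factorial)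
      = z ^ i / i.factorial * (z ^ (n - i) / (n - i).factorial) := by
  have hfac : (n.factorial : K) ≠ 0 := Nat.cast_ne_zero.2 n.factorial_ne_zero
  rw [Nat.cast_choose K h, div_mul_div_comm (z ^ i), ← pow_add, Nat.add_sub_cancel' h]
  field_simp

theorem pow_apply_lie {k L : Type*} [CommRing k] [LieRing L] [LieAlgebra k L]
    {T : L →ₗ[k] L} (hder : ∀ x y : L, T ⁅x, y⁆ = ⁅T x, y⁆ + ⁅x, T y⁆) (n : ℕ) (a b : L) :
    (T ^ n) ⁅a, b⁆ = ∑ i ∈ range (n + 1), n.choose i • ⁅(T ^ i) a, (T ^ (n - i)) b⁆ := by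
  have leibniz := LieDerivation.iterate_apply_lie'
    ⟨T, fun a b ↦ by rw [hder, ← lie_skew b]; abel⟩ n a b
  simpa only [Module.End.pow_apply, LieDerivation.mk_coe] using leibniz

section LocallyNilpotent

variable {k L : Type*} [Field k] [LieRing L] [LieAlgebra k L] {T : L →ₗ[k] L}
  (hder : ∀ x y : L, T ⁅x, y⁆ = ⁅T x, y⁆ + ⁅x, T y⁆) {a b : L} {N : ℕ}
  (ha : (T ^ N) a = 0) (hb : (T ^ N) b = 0)
include hder ha hb

theorem pow_apply_lie_eq_zero : (T ^ (2 * N)) ⁅a, b⁆ = 0 := by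
  rw [pow_apply_lie hder]
  refine sum_eq_zero fun i _ ↦ ?_
  rcases le_or_gt N i with hi | hi
  · rw [Module.End.pow_map_zero_of_le hi ha, zero_lie, smul_zero]
  · rw [Module.End.pow_map_zero_of_le (by omega) hb, lie_zero, smul_zero]

theorem sum_exp_lie [CharZero k] (z : k) :
    ∑ n ∈ range (2 * N), (z ^ n / n.factorial : k) • (T ^ n) ⁅a, b⁆
      = ⁅∑ i ∈ range (2 * N), (z ^ i / i.factorial : k) • (T ^ i) a,
          ∑ j ∈ range (2 * N), (z ^ j / j.factorial : k) • (T ^ j) b⁆ := by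
  set g : ℕ → ℕ → L := fun i j ↦
    (z ^ i / i.factorial * (z ^ j / j.factorial) : k) • ⁅(T ^ i) a, (T ^ j) b⁆
  have hg : ∀ i j, 2 * N ≤ i + j → g i j = 0 := by
    intro i j hij
    rcases le_or_gt N i with hi | hi
    · simp only [g, Module.End.pow_map_zero_of_le hi ha, zero_lie, smul_zero]
    · simp only [g, Module.End.pow_map_zero_of_le (by omega : N ≤ j) hb, lie_zero, smul_zero]
  calc ∑ n ∈ range (2 * N), (z ^ n / n.factorial : k) • (T ^ n) ⁅a, b⁆
      = ∑ n ∈ range (2 * N), ∑ i ∈ range (n + 1), g i (n - i) := by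
        refine sum_congr rfl fun n _ ↦ ?_
        rw [pow_apply_lie hder, smul_sum]
        refine sum_congr rfl fun i hi ↦ ?_
        rw [← Nat.cast_smul_eq_nsmul k, smul_smul, mul_comm,
          choose_mul_pow_div_factorial z (Nat.lt_succ_iff.1 (mem_range.1 hi))]
    _ = ∑ i ∈ range (2 * N), ∑ j ∈ range (2 * N), g i j :=
        sum_range_diag_eq_sum_range_sum_range _ g hg
    _ = _ := by
        rw [sum_lie]
        refine sum_congr rfl fun i _ ↦ ?_
        rw [smul_lie, lie_sum, smul_sum]
        exact sum_congr rfl fun j _ ↦ by rw [lie_smul, smul_smul]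

end LocallyNilpotent

theorem map_lie_of_forall_eq_sum_exp {k L : Type*} [Field k] [CharZero k] [LieRing L]
    [LieAlgebra k L] {T : L →ₗ[k] L} (hder : ∀ x y : L, T ⁅x, y⁆ = ⁅T x, y⁆ + ⁅x, T y⁆)
    (hnil : ∀ x : L, ∃ N, (T ^ N) x = 0) {σ : L → L} (z : k)
    (hσ : ∀ (x : L) (N : ℕ), (T ^ N) x = 0 →
      σ x = ∑ n ∈ range N, (z ^ n / (n.factorial : k)) • (T ^ n) x)
    (a b : L) : σ ⁅a, b⁆ = ⁅σ a, σ b⁆ := by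
  obtain ⟨Na, ha⟩ := hnil a
  obtain ⟨Nb, hb⟩ := hnil b
  have ha' := Module.End.pow_map_zero_of_le (le_max_left Na Nb) ha
  have hb' := Module.End.pow_map_zero_of_le (le_max_right Na Nb) hb
  have h2 : max Na Nb ≤ 2 * max Na Nb := by omega
  rw [hσ _ _ (pow_apply_lie_eq_zero hder ha' hb'),
    hσ a _ (Module.End.pow_map_zero_of_le h2 ha'), hσ b _ (Module.End.pow_map_zero_of_le h2 hb'),
    sum_exp_lie hder ha' hb']

theorem map_id_lie_of_map_lie {k L L' : Type*} [CommRing k] [LieRing L] [LieAlgebra k L]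
    [LieRing L'] [LieAlgebra k L'] (σ : L →ₗ[k] L') (hσ : ∀ u v, σ ⁅u, v⁆ = ⁅σ u, σ v⁆)
    (x : L) (t : L ⊗[k] L) :
    TensorProduct.map σ LinearMap.id ⁅x, t⁆
      = TensorProduct.map (LieAlgebra.ad k L' (σ x)) LinearMap.id
          (TensorProduct.map σ LinearMap.id t)
        + TensorProduct.map LinearMap.id (LieAlgebra.ad k L x)
          (TensorProduct.map σ LinearMap.id t) := by
  induction t using TensorProduct.induction_on with
  | zero => simp
  | tmul u v =>
    simp only [LieModule.lie_tmul_right, map_add, map_tmul, LinearMap.id_coe, id_eq,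
      LieAlgebra.ad_apply, hσ]
  | add s t hs ht =>
    rw [lie_add, map_add, hs, ht, map_add, map_add, map_add]
    abel

theorem translated_cocycle_identity_general {k L : Type*} [Field k] [CharZero k]
    [LieRing L] [LieAlgebra k L]
    (T : L →ₗ[k] L)
    (hder : ∀ x y : L, T ⁅x, y⁆ = ⁅T x, y⁆ + ⁅x, T y⁆)
    (hnil : ∀ x : L, ∃ N, (T ^ N) x = 0)
    (τ : k → L →ₗ[k] L)
    (hτ : ∀ (z : k) (x : L) (N : ℕ), (T ^ N) x = 0 →
      τ z x = ∑ n ∈ Finset.range N, (z ^ n / (n.factorial : k)) • (T ^ n) x)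
    (δ : L →ₗ[k] L ⊗[k] L)
    (hcoc : ∀ x y : L, δ ⁅x, y⁆ = ⁅x, δ y⁆ - ⁅y, δ x⁆)
    (z : k) (x y : L) :
    TensorProduct.map (τ z) LinearMap.id (δ ⁅x, y⁆)
      = (TensorProduct.map ((LieAlgebra.ad k L) (τ z x)) LinearMap.id
            (TensorProduct.map (τ z) LinearMap.id (δ y))
          + TensorProduct.map LinearMap.id ((LieAlgebra.ad k L) x)
            (TensorProduct.map (τ z) LinearMap.id (δ y)))
        - (TensorProduct.map ((LieAlgebra.ad k L) (τ z y)) LinearMap.id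
            (TensorProduct.map (τ z) LinearMap.id (δ x))
          + TensorProduct.map LinearMap.id ((LieAlgebra.ad k L) y)
            (TensorProduct.map (τ z) LinearMap.id (δ x))) := by
  have hτ_lie := map_lie_of_forall_eq_sum_exp hder hnil z (hτ z)
  rw [hcoc, map_sub, map_id_lie_of_map_lie (τ z) hτ_lie, map_id_lie_of_map_lie (τ z) hτ_lie]

/-- Let `δ : L → L ⊗ L` be a 1-cocycle on a Lie algebra `L` over a
characteristic-zero field (`δ[x,y] = [x, δy] - [y, δx]` for the adjoint action on the
tensor square), let `T` be a locally nilpotent derivation of `L` with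
`δ∘T = (T⊗1 + 1⊗T)∘δ`, and let `τ_z = e^{zT}`.  Then `δ_z := (τ_z ⊗ 1)∘δ` satisfies the
translated cocycle identity
`δ_z[x,y] = [τ_z(x)⊗1 + 1⊗x, δ_z(y)] - [τ_z(y)⊗1 + 1⊗y, δ_z(x)]`. -/
theorem translated_cocycle_identity {k L : Type*} [Field k] [CharZero k]
    [LieRing L] [LieAlgebra k L]
    (T : L →ₗ[k] L)
    (hder : ∀ x y : L, T ⁅x, y⁆ = ⁅T x, y⁆ + ⁅x, T y⁆)
    (hnil : ∀ x : L, ∃ N, (T ^ N) x = 0)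
    (τ : k → L →ₗ[k] L)
    (hτ : ∀ (z : k) (x : L) (N : ℕ), (T ^ N) x = 0 →
      τ z x = ∑ n ∈ Finset.range N, (z ^ n / (n.factorial : k)) • (T ^ n) x)
    (δ : L →ₗ[k] L ⊗[k] L)
    (hcoc : ∀ x y : L, δ ⁅x, y⁆ = ⁅x, δ y⁆ - ⁅y, δ x⁆)
    (hTδ : ∀ x : L, δ (T x)
      = TensorProduct.map T LinearMap.id (δ x) + TensorProduct.map LinearMap.id T (δ x))
    (z : k) (x y : L) :
    TensorProduct.map (τ z) LinearMap.id (δ ⁅x, y⁆)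
      = (TensorProduct.map ((LieAlgebra.ad k L) (τ z x)) LinearMap.id
            (TensorProduct.map (τ z) LinearMap.id (δ y))
          + TensorProduct.map LinearMap.id ((LieAlgebra.ad k L) x)
            (TensorProduct.map (τ z) LinearMap.id (δ y)))
        - (TensorProduct.map ((LieAlgebra.ad k L) (τ z y)) LinearMap.id
            (TensorProduct.map (τ z) LinearMap.id (δ x))
          + TensorProduct.map LinearMap.id ((LieAlgebra.ad k L) y)
            (TensorProduct.map (τ z) LinearMap.id (δ x))) :=
  translated_cocycle_identity_general T hder hnil τ hτ δ hcoc z x y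
end

section
/- Let H be a Hopf algebra over a commutative ring, Δ its coproduct, and suppose T is a Hopf algebra derivation of H (a derivation with ΔT = (T⊗1 + 1⊗T)Δ) which acts locally nilpotently. Set τ_z := e^{zT} and Δ_z := (τ_z ⊗ 1)Δ. Suppose R_s(z) is an invertible element with R_s(z)⁻¹ Δ_{ℏ,z}(a) R_s(z) = Δ_z(a) for all a, where Δ_{ℏ,z} := (τ_z⊗1)Δ_ℏ for another coproduct Δ_ℏ, and suppose Δ_z^op = (τ_z ⊗ τ_z) Δ_{-z} and (T⊗1 + 1⊗T)R_s(z) = 0. Then R(z) := R_s²¹(-z) R_s(z)⁻¹ satisfies (τ_z ⊗ 1)Δ_ℏ^op(a) = R(z)·(τ_z⊗1)Δ_ℏ(a)·R(z)⁻¹ for all a. -/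
/-- Abstract conjugation identity producing the R-matrix from the
meromorphic twist.  Here `B` plays the role of `(H⊗H)((z⁻¹))`, `σ` the tensor flip
(`op`/`²¹`), `τ2 w` the ring endomorphism `τ_w ⊗ τ_w`, `Rs w` the invertible twist
`R_s(w)`, and for `a ∈ H`:
`Dh w a = (τ_w⊗1)Δ_ℏ(a)`, `Dhop w a = (τ_w⊗1)Δ_ℏ^op(a)`, `Dz w a = Δ_w(a)`.
Hypotheses: (i) `R_s(w)⁻¹ (τ_w⊗1)Δ_ℏ(a) R_s(w) = Δ_w(a)`;
(ii) `Δ_w^op(a) = (τ_w⊗τ_w)Δ_{-w}(a)`;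
(iii) `(T⊗1+1⊗T)R_s = 0`, i.e. `(τ_z⊗τ_z)` fixes `R_s(-z)`;
(iv) the structural identity `σ((τ_z⊗τ_z)(τ_{-z}⊗1)Δ_ℏ(a)) = (τ_z⊗1)Δ_ℏ^op(a)`;
(v) `σ` is involutive.
Then `R(z) := R_s²¹(-z)·R_s(z)⁻¹` satisfies
`(τ_z⊗1)Δ_ℏ^op(a) = R(z) · (τ_z⊗1)Δ_ℏ(a) · R(z)⁻¹` for all `a`. -/
theorem full_R_matrix_intertwines {H B Z : Type*} [Ring B] [AddGroup Z]
    (σ : B →+* B) (τ2 : Z → B →+* B)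
    (Rs : Z → Bˣ)
    (Dh Dhop Dz : Z → H → B)
    (z : Z)
    (h1 : ∀ (w : Z) (a : H), Dh w a = (Rs w : B) * Dz w a * (((Rs w)⁻¹ : Bˣ) : B))
    (h2 : ∀ (w : Z) (a : H), σ (Dz w a) = τ2 w (Dz (-w) a))
    (h3 : τ2 z ((Rs (-z) : B)) = (Rs (-z) : B))
    (h4 : ∀ a : H, σ (τ2 z (Dh (-z) a)) = Dhop z a)
    (hσinv : ∀ x : B, σ (σ x) = x) :
    ∀ a : H,
      Dhop z a
        = ((Units.map σ.toMonoidHom (Rs (-z)) * (Rs z)⁻¹ : Bˣ) : B) * Dh z a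
          * (((Units.map σ.toMonoidHom (Rs (-z)) * (Rs z)⁻¹)⁻¹ : Bˣ) : B) := by
  intro a
  -- τ2 z fixes Rs (-z) as a unit, hence also its inverse
  have hinv : τ2 z ((((Rs (-z))⁻¹ : Bˣ) : B)) = (((Rs (-z))⁻¹ : Bˣ) : B) := by
    have h := congrArg (τ2 z) (Rs (-z)).inv_mul
    rw [map_mul, map_one, h3] at h
    have := congrArg (fun x => x * (((Rs (-z))⁻¹ : Bˣ) : B)) h
    simpa [mul_assoc] using this
  -- key rewriting of Dz z a via h1
  have hDz : Dz z a = (((Rs z)⁻¹ : Bˣ) : B) * Dh z a * (Rs z : B) := by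
    rw [h1 z a]
    simp [mul_assoc]
  calc
    Dhop z a = σ (τ2 z (Dh (-z) a)) := (h4 a).symm
    _ = σ ((Rs (-z) : B) * τ2 z (Dz (-z) a) * (((Rs (-z))⁻¹ : Bˣ) : B)) := by
          rw [h1 (-z) a]
          congr 1
          rw [map_mul, map_mul, h3, hinv]
    _ = σ ((Rs (-z) : B) * σ (Dz z a) * (((Rs (-z))⁻¹ : Bˣ) : B)) := by
          rw [h2 z a]
    _ = σ (Rs (-z) : B) * Dz z a * σ (((Rs (-z))⁻¹ : Bˣ) : B) := by
          rw [map_mul, map_mul, hσinv]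
    _ = σ (Rs (-z) : B) * ((((Rs z)⁻¹ : Bˣ) : B) * Dh z a * (Rs z : B)) * σ (((Rs (-z))⁻¹ : Bˣ) : B) := by
          rw [hDz]
    _ = ((Units.map σ.toMonoidHom (Rs (-z)) * (Rs z)⁻¹ : Bˣ) : B) * Dh z a
          * (((Units.map σ.toMonoidHom (Rs (-z)) * (Rs z)⁻¹)⁻¹ : Bˣ) : B) := by
          simp [Units.coe_map, Units.coe_map_inv, mul_assoc]
end
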